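/- Let I be an index set, d ≥ 1, and α : I → ℝ^d a map. Then for any finite sequences 𝐣 = (j_1,…,j_p) and 𝐤 = (k_1,…,k_q) in I, the convolution of measures on ℝ^d satisfies D_𝐣 * D_𝐤 = ∑_{𝐢 ∈ 𝐣 ⧢ 𝐤} D_𝐢, where the sum runs over the multiset 𝐣 ⧢ 𝐤 of the (p+q choose p) shuffles of 𝐣 and 𝐤 (counted with multiplicity, indexed by Sh(p,q)), and the convolution μ * ν is the pushforward of the product measure μ × ν under the addition map ℝ^d × ℝ^d → ℝ^d. -/

import Mathlib

open MeasureTheory Finset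

/-- Lebesgue measure `δ_{Δ^p}` on the standard `p`-simplex
`Δ^p = {c ∈ ℝ_{≥0}^{p+1} : c_0 + ⋯ + c_p = 1}`, realized as the pushforward of
`p`-dimensional Lebesgue measure on `{c ∈ ℝ_{≥0}^p : ∑ c_k ≤ 1}` under
`(c_1, …, c_p) ↦ (1 − ∑ c_k, c_1, …, c_p)`. -/
noncomputable def simplexMeasure (p : ℕ) : Measure (Fin (p + 1) → ℝ) :=
  Measure.map (fun c : Fin p → ℝ => Fin.cons (1 - ∑ k, c k) c)
    (volume.restrict {c : Fin p → ℝ | (∀ k, 0 ≤ c k) ∧ ∑ k, c k ≤ 1})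

/-- The partial sums `β^𝐢_k = α_{i_1} + ⋯ + α_{i_k}` (with `β^𝐢_0 = 0`). -/
noncomputable def beta {I : Type*} {d : ℕ} (α : I → Fin d → ℝ) {p : ℕ}
    (i : Fin p → I) (k : Fin (p + 1)) : Fin d → ℝ :=
  ∑ j ∈ Finset.univ.filter (fun j : Fin p => (j : ℕ) < (k : ℕ)), α (i j)

/-- The measure `D_𝐢 = (π_𝐢)_* δ_{Δ^p}` on `ℝ^d`, where
`π_𝐢(c_0, …, c_p) = −∑_k c_k β^𝐢_k`. -/
noncomputable def Dmeas {I : Type*} {d : ℕ} (α : I → Fin d → ℝ) {p : ℕ}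
    (i : Fin p → I) : Measure (Fin d → ℝ) :=
  Measure.map (fun c : Fin (p + 1) → ℝ => -∑ k : Fin (p + 1), c k • beta α i k)
    (simplexMeasure p)

/-- `Sh(p,q)`: permutations of `{1, …, p+q}` increasing on the first `p`
and on the last `q` indices; they index the shuffles of two sequences of
lengths `p` and `q`. -/
def Sh (p q : ℕ) : Finset (Equiv.Perm (Fin (p + q))) :=
  Finset.univ.filter (fun σ =>
    (∀ i j : Fin (p + q), i < j → (j : ℕ) < p → σ i < σ j) ∧
    (∀ i j : Fin (p + q), i < j → p ≤ (i : ℕ) → σ i < σ j))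

/-! Summation by parts gives `∑ₖ cₖ β_k = ∑ₘ sₘ α_{i_m}` with the tail sums
`sₘ = cₘ + ⋯ + c_p`, and `c ↦ s` is a unimodular linear change of variables carrying the
simplex onto the order simplex `1 ≥ s₁ ≥ ⋯ ≥ s_p ≥ 0`; so `D_𝐢` is the image of Lebesgue
measure on the order simplex under `s ↦ -∑ₘ sₘ α_{i_m}`. Up to the null set of points with a
repeated coordinate, the product of the order simplices of dimensions `p` and `q` is the
disjoint union, over `σ ∈ Sh(p,q)`, of the cells where `u ∘ σ⁻¹` is antitone, each a
coordinate permutation of the order simplex of dimension `p + q`. On the cell of `σ` the sum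
of the two maps is the map of the shuffled sequence `(𝐣𝐤) ∘ σ⁻¹`. -/

section NegWeightedSum

variable {E : Type*} [AddCommGroup E] [Module ℝ E] {ι : Type*} [Fintype ι]

def negWeightedSum (b : ι → E) (s : ι → ℝ) : E := -∑ m, s m • b m

lemma negWeightedSum_comp_perm (b : ι → E) (σ : Equiv.Perm ι) (u : ι → ℝ) :
    negWeightedSum (b ∘ ⇑σ⁻¹) u = negWeightedSum b (u ∘ σ) := by
  simp only [negWeightedSum, Function.comp_apply]
  rw [← Equiv.sum_comp σ]
  simp

lemma negWeightedSum_fin_add {p q : ℕ} (b : Fin (p + q) → E) (u : Fin (p + q) → ℝ) :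
    negWeightedSum b u = negWeightedSum (b ∘ Fin.castAdd q) (u ∘ Fin.castAdd q) +
      negWeightedSum (b ∘ Fin.natAdd p) (u ∘ Fin.natAdd p) := by
  simp only [negWeightedSum, Fin.sum_univ_add, neg_add, Function.comp_apply]

lemma measurable_negWeightedSum [TopologicalSpace E] [IsTopologicalAddGroup E]
    [ContinuousSMul ℝ E] [MeasurableSpace E] [BorelSpace E] (b : ι → E) :
    Measurable (negWeightedSum b) := by
  unfold negWeightedSum
  exact Continuous.measurable (by fun_prop)

end NegWeightedSum

lemma sum_smul_sum_Iic {R M : Type*} [Semiring R] [AddCommMonoid M] [Module R M] {ι : Type*}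
    [Fintype ι] [Preorder ι] [LocallyFiniteOrderBot ι] [LocallyFiniteOrderTop ι]
    (c : ι → R) (a : ι → M) :
    ∑ k, c k • ∑ j ∈ Iic k, a j = ∑ j, (∑ k ∈ Ici j, c k) • a j := by
  simp_rw [Finset.smul_sum, Finset.sum_smul]
  exact Finset.sum_comm' (by simp)

def orderSimplex (n : ℕ) : Set (Fin n → ℝ) := {s | Antitone s ∧ Set.range s ⊆ Set.Icc 0 1}

lemma measurableSet_orderSimplex (n : ℕ) : MeasurableSet (orderSimplex n) := by
  have hrange : IsClosed {s : Fin n → ℝ | Set.range s ⊆ Set.Icc 0 1} := by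
    simp_rw [Set.range_subset_iff, ← Set.mem_univ_pi]
    exact isClosed_set_pi fun _ _ => isClosed_Icc
  exact (isClosed_antitone.inter hrange).measurableSet

noncomputable def tailSums (n : ℕ) : (Fin n → ℝ) →ₗ[ℝ] Fin n → ℝ where
  toFun c m := ∑ k ∈ Ici m, c k
  map_add' c c' := by ext m; simp [Finset.sum_add_distrib]
  map_smul' r c := by ext m; simp [Finset.mul_sum]

@[simp]
lemma tailSums_apply {n : ℕ} (c : Fin n → ℝ) (m : Fin n) : tailSums n c m = ∑ k ∈ Ici m, c k :=
  rfl

lemma det_tailSums (n : ℕ) : LinearMap.det (tailSums n) = 1 := by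
  classical
  have hentry : ∀ i j, LinearMap.toMatrix' (tailSums n) i j = if i ≤ j then 1 else 0 := by
    intro i j
    simp [LinearMap.toMatrix'_apply, Pi.single_apply]
  rw [← LinearMap.det_toMatrix', Matrix.det_of_isUpperTriangular]
  · simp [hentry]
  · intro i j hji
    simpa [hentry] using hji

lemma map_tailSums_volume (n : ℕ) : Measure.map (tailSums n) volume = volume := by
  simp [Real.map_linearMap_volume_pi_eq_smul_volume_pi, det_tailSums]

lemma tailSums_preimage_orderSimplex (n : ℕ) :
    tailSums n ⁻¹' orderSimplex n = {c | (∀ k, 0 ≤ c k) ∧ ∑ k, c k ≤ 1} := by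
  ext c
  simp only [Set.mem_preimage, orderSimplex, Set.mem_ofPred_eq, Set.range_subset_iff, Set.mem_Icc,
    tailSums_apply]
  constructor
  · rintro ⟨hanti, hbounds⟩
    refine ⟨fun k => ?_, ?_⟩
    · have hsplit := add_sum_Ioi_eq_sum_Ici (f := c) k
      by_cases hk : IsMax k
      · rw [Ioi_eq_empty.2 hk, sum_empty, add_zero] at hsplit
        exact hsplit ▸ (hbounds k).1
      · rw [← Ici_succ_eq_Ioi_of_not_isMax hk] at hsplit
        have hle : ∑ x ∈ Ici (Order.succ k), c x ≤ ∑ x ∈ Ici k, c x := hanti (Order.le_succ k)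
        linarith
    · cases n with
      | zero => simp
      | succ n => simpa [← Finset.Ici_bot] using (hbounds 0).2
  · rintro ⟨hnonneg, hsum⟩
    refine ⟨fun m l hml => ?_, fun m => ⟨sum_nonneg fun k _ => hnonneg k, ?_⟩⟩
    · exact sum_le_sum_of_subset_of_nonneg (Ici_subset_Ici.2 hml) fun k _ _ => hnonneg k
    · exact (sum_le_sum_of_subset_of_nonneg (subset_univ _) fun k _ _ => hnonneg k).trans hsum

section Beta

variable {I : Type*} {d : ℕ} (α : I → Fin d → ℝ) {p : ℕ} (i : Fin p → I)

lemma beta_zero : beta α i 0 = 0 := by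
  simp only [beta, Fin.val_zero, Nat.not_lt_zero, Finset.filter_false, sum_empty]

lemma beta_succ (k : Fin p) : beta α i k.succ = ∑ j ∈ Iic k, α (i j) := by
  unfold beta
  congr 1
  refine Finset.ext fun j => ?_
  simp only [mem_filter, mem_univ, true_and, mem_Iic, Fin.val_succ, Fin.le_def]
  omega

lemma negWeightedSum_beta_cons (c : Fin p → ℝ) :
    negWeightedSum (beta α i) (Fin.cons (1 - ∑ k, c k) c) =
      negWeightedSum (α ∘ i) (tailSums p c) := by
  simp only [negWeightedSum, Fin.sum_univ_succ, Fin.cons_zero, Fin.cons_succ, beta_zero, beta_succ,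
    smul_zero, zero_add, sum_smul_sum_Iic, tailSums_apply, Function.comp_apply]

lemma Dmeas_eq_map_orderSimplex :
    Dmeas α i = (volume.restrict (orderSimplex p)).map (negWeightedSum (α ∘ i)) := by
  have hcons : Measurable fun c : Fin p → ℝ => (Fin.cons (1 - ∑ k, c k) c : Fin (p + 1) → ℝ) := by
    fun_prop
  have htail : Measurable (tailSums p) := (tailSums p).continuous_of_finiteDimensional.measurable
  rw [show Dmeas α i = (simplexMeasure p).map (negWeightedSum (beta α i)) from rfl,
    simplexMeasure, Measure.map_map (measurable_negWeightedSum _) hcons]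
  simp_rw [Function.comp_def, negWeightedSum_beta_cons]
  rw [← Function.comp_def, ← Measure.map_map (measurable_negWeightedSum _) htail,
    ← tailSums_preimage_orderSimplex, ← Measure.restrict_map htail (measurableSet_orderSimplex p),
    map_tailSums_volume]
  rfl

end Beta

lemma mem_Sh_iff {p q : ℕ} {σ : Equiv.Perm (Fin (p + q))} :
    σ ∈ Sh p q ↔ StrictMono (σ ∘ Fin.castAdd q) ∧ StrictMono (σ ∘ Fin.natAdd p) := by
  simp only [Sh, mem_filter, mem_univ, true_and]
  refine and_congr ⟨fun h i j hij => h _ _ hij (by simp), fun h i j hij hj => ?_⟩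
    ⟨fun h i j hij => h _ _ (by simpa using hij) (by simp), fun h i j hij hi => ?_⟩
  · exact h (show (⟨i, by omega⟩ : Fin p) < ⟨j, hj⟩ from hij)
  · have hj : p ≤ (j : ℕ) := hi.trans (Fin.lt_def.1 hij).le
    obtain ⟨i', rfl⟩ : ∃ i', Fin.natAdd p i' = i := ⟨⟨i - p, by omega⟩, Fin.ext (by simp; omega)⟩
    obtain ⟨j', rfl⟩ : ∃ j', Fin.natAdd p j' = j := ⟨⟨j - p, by omega⟩, Fin.ext (by simp; omega)⟩
    exact h (by simpa using hij)

lemma strictMono_comp_iff_strictAnti_comp {κ β ι : Type*} [LinearOrder κ] [Preorder β]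
    [Preorder ι] {u : κ → β} {σ : Equiv.Perm κ} (hσ : StrictAnti (u ∘ ⇑σ⁻¹)) (e : ι → κ) :
    StrictMono (σ ∘ e) ↔ StrictAnti (u ∘ e) := by
  have hu : u ∘ e = (u ∘ ⇑σ⁻¹) ∘ (σ ∘ e) := by ext; simp
  refine ⟨fun he => hu ▸ hσ.comp_strictMono he, fun he i j hij => ?_⟩
  rw [Function.comp_apply, Function.comp_apply, ← hσ.lt_iff_gt]
  simpa using he hij

lemma exists_perm_antitone_comp {n : ℕ} {β : Type*} [LinearOrder β] (u : Fin n → β) :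
    ∃ ρ : Equiv.Perm (Fin n), Antitone (u ∘ ρ) :=
  ⟨Tuple.sort (OrderDual.toDual ∘ u), monotone_toDual_comp_iff.1 (Tuple.monotone_sort _)⟩

lemma perm_eq_of_strictAnti_comp_inv {n : ℕ} {β : Type*} [Preorder β] {u : Fin n → β}
    {σ τ : Equiv.Perm (Fin n)} (hσ : StrictAnti (u ∘ ⇑σ⁻¹)) (hτ : StrictAnti (u ∘ ⇑τ⁻¹)) :
    σ = τ := by
  have hmono : StrictMono (σ ∘ ⇑τ⁻¹) := (strictMono_comp_iff_strictAnti_comp hσ _).2 hτ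
  have hid : σ ∘ ⇑τ⁻¹ = id :=
    (hmono.range_inj strictMono_id).1 (by simp [EquivLike.range_comp])
  exact Equiv.ext fun m => by simpa using congrFun hid (τ m)

lemma mem_orderSimplex_prod_iff_exists_shuffle {p q : ℕ} {u : Fin (p + q) → ℝ}
    (hu : Function.Injective u) :
    (u ∘ Fin.castAdd q ∈ orderSimplex p ∧ u ∘ Fin.natAdd p ∈ orderSimplex q) ↔
      ∃ σ ∈ Sh p q, u ∘ ⇑σ⁻¹ ∈ orderSimplex (p + q) := by
  have hrange : ∀ S : Set ℝ, Set.range u ⊆ S ↔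
      Set.range (u ∘ Fin.castAdd q) ⊆ S ∧ Set.range (u ∘ Fin.natAdd p) ⊆ S := by
    simp only [Set.range_subset_iff, Fin.forall_fin_add, Function.comp_apply, implies_true]
  have hblock : ∀ {m : ℕ} (e : Fin m → Fin (p + q)), Function.Injective e →
      Antitone (u ∘ e) → StrictAnti (u ∘ e) :=
    fun e he hanti => hanti.strictAnti_of_injective (hu.comp he)
  constructor
  · rintro ⟨⟨hanti₁, hrange₁⟩, hanti₂, hrange₂⟩
    obtain ⟨ρ, hρ⟩ := exists_perm_antitone_comp u
    have hs : StrictAnti (u ∘ ⇑ρ⁻¹⁻¹) := by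
      simpa using hblock ρ ρ.injective hρ
    refine ⟨ρ⁻¹, mem_Sh_iff.2 ⟨?_, ?_⟩, by simpa using hρ, ?_⟩
    · exact (strictMono_comp_iff_strictAnti_comp hs _).2
        (hblock _ (Fin.castAdd_injective p q) hanti₁)
    · exact (strictMono_comp_iff_strictAnti_comp hs _).2
        (hblock _ (Fin.natAdd_injective q p) hanti₂)
    · rw [EquivLike.range_comp]
      exact (hrange _).2 ⟨hrange₁, hrange₂⟩
  · rintro ⟨σ, hσ, hanti, hrangeσ⟩
    have hs : StrictAnti (u ∘ ⇑σ⁻¹) := hblock _ (σ⁻¹).injective hanti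
    rw [mem_Sh_iff, strictMono_comp_iff_strictAnti_comp hs,
      strictMono_comp_iff_strictAnti_comp hs] at hσ
    rw [EquivLike.range_comp, hrange] at hrangeσ
    exact ⟨⟨hσ.1.antitone, hrangeσ.1⟩, hσ.2.antitone, hrangeσ.2⟩

lemma ae_injective_volume_pi {ι : Type*} [Fintype ι] : ∀ᵐ u : ι → ℝ, Function.Injective u := by
  classical
  have hdiag : ∀ l l' : ι, ∀ᵐ u : ι → ℝ, l ≠ l' → u l ≠ u l' := by
    intro l l'
    by_cases hne : l = l'
    · exact Filter.Eventually.of_forall fun _ h => absurd hne h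
    have hker : {u : ι → ℝ | u l = u l'} =
        LinearMap.ker ((LinearMap.proj l : (ι → ℝ) →ₗ[ℝ] ℝ) - LinearMap.proj l') := by
      ext u
      simp [sub_eq_zero]
    have hnull : volume {u : ι → ℝ | u l = u l'} = 0 := by
      refine hker ▸ Measure.addHaar_submodule _ _ fun htop => ?_
      have := LinearMap.congr_fun (LinearMap.ker_eq_top.1 htop) (Pi.single l 1)
      simp [Ne.symm hne] at this
    exact (measure_eq_zero_iff_ae_notMem.1 hnull).mono fun u hu _ => hu
  filter_upwards [ae_all_iff.2 fun l => ae_all_iff.2 (hdiag l)] with u hu l l' h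
  by_contra hne
  exact hu l l' hne h

lemma MeasureTheory.Measure.restrict_biUnion_finset₀ {α ι : Type*} [MeasurableSpace α]
    {μ : Measure α} {s : Finset ι} {t : ι → Set α} (hd : (s : Set ι).Pairwise (Function.onFun (AEDisjoint μ) t))
    (hm : ∀ i ∈ s, NullMeasurableSet (t i) μ) :
    μ.restrict (⋃ i ∈ s, t i) = ∑ i ∈ s, μ.restrict (t i) := by
  ext A hA
  simp only [Measure.restrict_apply hA, Measure.coe_finsetSum, Finset.sum_apply,
    Set.inter_iUnion₂]
  exact measure_biUnion_finset₀ (hd.mono' fun i j h => h.mono Set.inter_subset_right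
    Set.inter_subset_right) fun i hi => hA.nullMeasurableSet.inter (hm i hi)

lemma map_comp_perm_volume_restrict {ι : Type*} [Fintype ι] (σ : Equiv.Perm ι)
    (s : Set (ι → ℝ)) :
    (volume.restrict s).map (fun v => v ∘ σ) = volume.restrict {u | u ∘ ⇑σ⁻¹ ∈ s} := by
  let e := (MeasurableEquiv.piCongrLeft (fun _ : ι => ℝ) σ).symm
  have he : MeasurePreserving e volume volume :=
    (volume_measurePreserving_piCongrLeft (fun _ : ι => ℝ) σ).symm _
  have happly : ∀ v, e v = v ∘ σ := fun v => rfl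
  have hpre : e ⁻¹' {u | u ∘ ⇑σ⁻¹ ∈ s} = s := by
    ext v
    simp [happly, Function.comp_def]
  conv_rhs => rw [← he.map_eq, e.restrict_map, hpre]
  rfl

def finAddSplit (p q : ℕ) : (Fin (p + q) → ℝ) ≃ᵐ (Fin p → ℝ) × (Fin q → ℝ) :=
  (MeasurableEquiv.piCongrLeft (fun _ => ℝ) finSumFinEquiv).symm.trans
    (MeasurableEquiv.sumPiEquivProdPi fun _ => ℝ)

lemma finAddSplit_apply {p q : ℕ} (u : Fin (p + q) → ℝ) :
    finAddSplit p q u = (u ∘ Fin.castAdd q, u ∘ Fin.natAdd p) :=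
  rfl

lemma measurePreserving_finAddSplit (p q : ℕ) :
    MeasurePreserving (finAddSplit p q) :=
  (volume_measurePreserving_sumPiEquivProdPi _).comp
    ((volume_measurePreserving_piCongrLeft _ finSumFinEquiv).symm _)

theorem orderSimplex_prod_eq_sum_shuffles (p q : ℕ) :
    (volume.restrict (orderSimplex p)).prod (volume.restrict (orderSimplex q)) =
      ∑ σ ∈ Sh p q, (volume.restrict (orderSimplex (p + q))).map
        (fun u => finAddSplit p q (u ∘ σ)) := by
  let cell : Equiv.Perm (Fin (p + q)) → Set (Fin (p + q) → ℝ) :=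
    fun σ => {u | u ∘ ⇑σ⁻¹ ∈ orderSimplex (p + q)}
  have hcover : finAddSplit p q ⁻¹' (orderSimplex p ×ˢ orderSimplex q) =ᵐ[volume]
      ⋃ σ ∈ Sh p q, cell σ :=
    Filter.eventuallyEq_set.2 <| ae_injective_volume_pi.mono fun u hu => by
      simpa [cell, finAddSplit_apply] using mem_orderSimplex_prod_iff_exists_shuffle hu
  have hdisj : (Sh p q : Set _).Pairwise (Function.onFun (AEDisjoint volume) cell) := by
    intro σ _ τ _ hne
    refine measure_eq_zero_iff_ae_notMem.2 <|
      ae_injective_volume_pi.mono fun u hu ⟨hσ, hτ⟩ => hne ?_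
    exact perm_eq_of_strictAnti_comp_inv (hσ.1.strictAnti_of_injective (hu.comp (σ⁻¹).injective))
      (hτ.1.strictAnti_of_injective (hu.comp (τ⁻¹).injective))
  have hmeas : ∀ σ, MeasurableSet (cell σ) := fun σ =>
    (measurableSet_orderSimplex _).preimage (by fun_prop)
  have hsplit : Measurable (finAddSplit p q) := (finAddSplit p q).measurable
  rw [Measure.prod_restrict, ← Measure.volume_eq_prod, ← (measurePreserving_finAddSplit p q).map_eq,
    MeasurableEquiv.restrict_map, Measure.restrict_congr_set hcover,
    Measure.restrict_biUnion_finset₀ hdisj fun σ _ => (hmeas σ).nullMeasurableSet,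
    Measure.map_finset_sum hsplit.aemeasurable]
  refine Finset.sum_congr rfl fun σ _ => ?_
  rw [← map_comp_perm_volume_restrict, Measure.map_map hsplit (by fun_prop)]
  rfl

theorem convolution_shuffle_identity_general {I : Type*} (d : ℕ)
    (α : I → Fin d → ℝ) (p q : ℕ) (j : Fin p → I) (k : Fin q → I) :
    Measure.map (fun y : (Fin d → ℝ) × (Fin d → ℝ) => y.1 + y.2)
        ((Dmeas α j).prod (Dmeas α k)) =
      ∑ σ ∈ Sh p q, Dmeas α (Fin.append j k ∘ ⇑σ⁻¹) := by
  have hadd : Measurable fun y : (Fin d → ℝ) × (Fin d → ℝ) => y.1 + y.2 := by fun_prop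
  have hpair : Measurable (Prod.map (negWeightedSum (α ∘ j)) (negWeightedSum (α ∘ k))) :=
    (measurable_negWeightedSum _).prodMap (measurable_negWeightedSum _)
  have hsplit : ∀ σ : Equiv.Perm (Fin (p + q)),
      Measurable fun u : Fin (p + q) → ℝ => finAddSplit p q (u ∘ σ) :=
    fun σ => (finAddSplit p q).measurable.comp (by fun_prop)
  have hshuffle : ∀ σ : Equiv.Perm (Fin (p + q)),
      (fun y : (Fin d → ℝ) × (Fin d → ℝ) => y.1 + y.2) ∘
          Prod.map (negWeightedSum (α ∘ j)) (negWeightedSum (α ∘ k)) ∘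
          (fun u => finAddSplit p q (u ∘ σ)) =
        negWeightedSum (α ∘ (Fin.append j k ∘ ⇑σ⁻¹)) := by
    intro σ
    ext u : 1
    rw [← Function.comp_assoc α, negWeightedSum_comp_perm, negWeightedSum_fin_add]
    simp [finAddSplit_apply, Function.comp_def]
  rw [Dmeas_eq_map_orderSimplex, Dmeas_eq_map_orderSimplex,
    Measure.map_prod_map _ _ (measurable_negWeightedSum _) (measurable_negWeightedSum _),
    Measure.map_map hadd hpair, orderSimplex_prod_eq_sum_shuffles,
    Measure.map_finset_sum (hadd.comp hpair).aemeasurable]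
  refine Finset.sum_congr rfl fun σ _ => ?_
  rw [Measure.map_map (hadd.comp hpair) (hsplit σ),
    Dmeas_eq_map_orderSimplex, ← hshuffle σ]
  rfl

theorem convolution_shuffle_identity {I : Type*} (d : ℕ) (hd : 1 ≤ d)
    (α : I → Fin d → ℝ) (p q : ℕ) (j : Fin p → I) (k : Fin q → I) :
    Measure.map (fun y : (Fin d → ℝ) × (Fin d → ℝ) => y.1 + y.2)
        ((Dmeas α j).prod (Dmeas α k)) =
      ∑ σ ∈ Sh p q, Dmeas α (Fin.append j k ∘ ⇑σ⁻¹) :=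
  convolution_shuffle_identity_general d α p q j k
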